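/- Let ℏ, m > 0 and identify ℝ × ℝ³ with ℝ⁴ via x₀ = t. For any a,b,c,d ∈ {0,1,2,3}, define the operator Q on smooth functions φ : ℝ × ℝ³ → ℂ by (Qφ)(x) = x_a x_b x_c ∂_d φ(x). Then the fourth-order commutator of the free Schrödinger operator with Q vanishes identically: for every smooth φ, [L_s,[L_s,[L_s,[L_s, Q]]]]φ = 0. -/

import Mathlib

open Complex

/-- Partial derivative in the `i`-th coordinate direction on `ℝ⁴`. -/
noncomputable def pd (i : Fin 4) (f : (Fin 4 → ℝ) → ℂ) : (Fin 4 → ℝ) → ℂ :=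
  fun x => fderiv ℝ f x (Pi.single i 1)

/-- The free Schrödinger operator `L_s φ = iℏ ∂_t φ + (ℏ²/(2m)) Δφ`,
with time variable `x 0` and space variables `x 1, x 2, x 3`. -/
noncomputable def Ls (hbar m : ℝ) (f : (Fin 4 → ℝ) → ℂ) : (Fin 4 → ℝ) → ℂ :=
  fun x => Complex.I * (hbar : ℂ) * pd 0 f x +
    ((hbar ^ 2 / (2 * m) : ℝ) : ℂ) *
      (pd 1 (pd 1 f) x + pd 2 (pd 2 f) x + pd 3 (pd 3 f) x)

/-- The cubic generator `Q φ = x_a x_b x_c ∂_d φ`. -/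
noncomputable def Qabcd (a b c d : Fin 4) (f : (Fin 4 → ℝ) → ℂ) : (Fin 4 → ℝ) → ℂ :=
  fun x => (x a : ℂ) * (x b : ℂ) * (x c : ℂ) * pd d f x

/-! ### basic lemmas on `pd` -/

theorem pd_contDiff {f : (Fin 4 → ℝ) → ℂ} (hf : ContDiff ℝ (⊤ : ℕ∞) f) (i : Fin 4) :
    ContDiff ℝ (⊤ : ℕ∞) (pd i f) := by
  have h := hf.fderiv_right (m := (⊤ : ℕ∞)) (by simp)
  exact h.clm_apply contDiff_const

theorem pd_add {f g : (Fin 4 → ℝ) → ℂ} (hf : ContDiff ℝ (⊤ : ℕ∞) f) (hg : ContDiff ℝ (⊤ : ℕ∞) g) (i : Fin 4) :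
    pd i (fun y => f y + g y) = fun x => pd i f x + pd i g x := by
  funext x
  simp [pd, fderiv_fun_add ((hf.differentiable (by simp)).differentiableAt)
    ((hg.differentiable (by simp)).differentiableAt)]

theorem pd_const_mul {f : (Fin 4 → ℝ) → ℂ} (hf : ContDiff ℝ (⊤ : ℕ∞) f) (c : ℂ) (i : Fin 4) :
    pd i (fun y => c * f y) = fun x => c * pd i f x := by
  funext x
  simp [pd, fderiv_const_mul ((hf.differentiable (by simp)).differentiableAt) c]

noncomputable def coordC (a : Fin 4) : (Fin 4 → ℝ) →L[ℝ] ℂ :=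
  Complex.ofRealCLM.comp (ContinuousLinearMap.proj a)

theorem coord_fderiv (a : Fin 4) (x : Fin 4 → ℝ) :
    fderiv ℝ (fun y : Fin 4 → ℝ => ((y a : ℝ) : ℂ)) x = coordC a :=
  (coordC a).fderiv

theorem coord_contDiff (a : Fin 4) :
    ContDiff ℝ (⊤ : ℕ∞) (fun y : Fin 4 → ℝ => ((y a : ℝ) : ℂ)) := (coordC a).contDiff

theorem pd_coord_mul {f : (Fin 4 → ℝ) → ℂ} (hf : ContDiff ℝ (⊤ : ℕ∞) f) (a i : Fin 4) :
    pd i (fun y => ((y a : ℝ) : ℂ) * f y)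
      = fun x => (if i = a then (1:ℂ) else 0) * f x + (x a : ℂ) * pd i f x := by
  funext x
  have hfd : DifferentiableAt ℝ f x := (hf.differentiable (by simp)).differentiableAt
  have hc : DifferentiableAt ℝ (fun y : Fin 4 → ℝ => ((y a : ℝ) : ℂ)) x :=
    (coordC a).differentiableAt
  show fderiv ℝ (fun y => ((y a : ℝ) : ℂ) * f y) x (Pi.single i 1) = _
  rw [fderiv_fun_mul hc hfd, coord_fderiv]
  simp only [ContinuousLinearMap.add_apply, ContinuousLinearMap.smul_apply, smul_eq_mul,
    coordC, ContinuousLinearMap.comp_apply, ContinuousLinearMap.proj_apply,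
    Complex.ofRealCLM_apply, Pi.single_apply]
  rcases eq_or_ne i a with h|h
  · simp [h, pd]; ring
  · simp [h, Ne.symm h, pd]

theorem pd_comm {f : (Fin 4 → ℝ) → ℂ} (hf : ContDiff ℝ (⊤ : ℕ∞) f) (i j : Fin 4) :
    pd i (pd j f) = pd j (pd i f) := by
  funext x
  have hsymm : IsSymmSndFDerivAt ℝ f x := by
    apply hf.contDiffAt.isSymmSndFDerivAt
    rw [minSmoothness_of_isRCLikeNormedField]
    exact WithTop.coe_le_coe.mpr le_top
  have hd : DifferentiableAt ℝ (fderiv ℝ f) x :=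
    ((hf.fderiv_right (m := (⊤ : ℕ∞)) (by simp)).differentiable (by simp)).differentiableAt
  have key : ∀ v : Fin 4 → ℝ, ∀ w : Fin 4 → ℝ,
      fderiv ℝ (fun y => fderiv ℝ f y w) x v = fderiv ℝ (fderiv ℝ f) x v w := by
    intro v w
    rw [fderiv_clm_apply hd (differentiableAt_const w)]
    simp
  show fderiv ℝ (fun y => fderiv ℝ f y (Pi.single j 1)) x (Pi.single i 1)
      = fderiv ℝ (fun y => fderiv ℝ f y (Pi.single i 1)) x (Pi.single j 1)
  rw [key, key, hsymm.eq]

/-! ### operators -/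

noncomputable def Mop (e : Fin 4) (f : (Fin 4 → ℝ) → ℂ) : (Fin 4 → ℝ) → ℂ :=
  fun x => ((x e : ℝ) : ℂ) * f x

noncomputable def Cop (hbar m : ℝ) (e : Fin 4) (f : (Fin 4 → ℝ) → ℂ) : (Fin 4 → ℝ) → ℂ :=
  if e = 0 then (fun x => Complex.I * (hbar : ℂ) * f x)
  else (fun x => 2 * ((hbar ^ 2 / (2 * m) : ℝ) : ℂ) * pd e f x)

theorem Mop_contDiff {f : (Fin 4 → ℝ) → ℂ} (hf : ContDiff ℝ (⊤ : ℕ∞) f) (e : Fin 4) :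
    ContDiff ℝ (⊤ : ℕ∞) (Mop e f) := (coord_contDiff e).mul hf

theorem Cop_contDiff (hbar m : ℝ) {f : (Fin 4 → ℝ) → ℂ} (hf : ContDiff ℝ (⊤ : ℕ∞) f) (e : Fin 4) :
    ContDiff ℝ (⊤ : ℕ∞) (Cop hbar m e f) := by
  unfold Cop
  split
  · exact contDiff_const.mul hf
  · exact contDiff_const.mul (pd_contDiff hf e)

theorem Ls_contDiff (hbar m : ℝ) {f : (Fin 4 → ℝ) → ℂ} (hf : ContDiff ℝ (⊤ : ℕ∞) f) :
    ContDiff ℝ (⊤ : ℕ∞) (Ls hbar m f) := by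
  unfold Ls
  exact (contDiff_const.mul (pd_contDiff hf 0)).add (contDiff_const.mul
    (((pd_contDiff (pd_contDiff hf 1) 1).add (pd_contDiff (pd_contDiff hf 2) 2)).add
      (pd_contDiff (pd_contDiff hf 3) 3)))

theorem Ls_add (hbar m : ℝ) {f g : (Fin 4 → ℝ) → ℂ}
    (hf : ContDiff ℝ (⊤ : ℕ∞) f) (hg : ContDiff ℝ (⊤ : ℕ∞) g) :
    Ls hbar m (fun y => f y + g y) = fun x => Ls hbar m f x + Ls hbar m g x := by
  unfold Ls
  rw [pd_add hf hg 0, pd_add hf hg 1, pd_add hf hg 2, pd_add hf hg 3,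
    pd_add (pd_contDiff hf 1) (pd_contDiff hg 1) 1,
    pd_add (pd_contDiff hf 2) (pd_contDiff hg 2) 2,
    pd_add (pd_contDiff hf 3) (pd_contDiff hg 3) 3]
  funext x; ring

theorem Ls_const_mul (hbar m : ℝ) {f : (Fin 4 → ℝ) → ℂ} (hf : ContDiff ℝ (⊤ : ℕ∞) f) (c : ℂ) :
    Ls hbar m (fun y => c * f y) = fun x => c * Ls hbar m f x := by
  unfold Ls
  rw [pd_const_mul hf c 0, pd_const_mul hf c 1, pd_const_mul hf c 2, pd_const_mul hf c 3,
    pd_const_mul (pd_contDiff hf 1) c 1, pd_const_mul (pd_contDiff hf 2) c 2,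
    pd_const_mul (pd_contDiff hf 3) c 3]
  funext x; ring

theorem Ls_pd (hbar m : ℝ) {f : (Fin 4 → ℝ) → ℂ} (hf : ContDiff ℝ (⊤ : ℕ∞) f) (d : Fin 4) :
    Ls hbar m (pd d f) = pd d (Ls hbar m f) := by
  have h1 : ContDiff ℝ (⊤ : ℕ∞) (fun y => Complex.I * (hbar:ℂ) * pd 0 f y) :=
    contDiff_const.mul (pd_contDiff hf 0)
  have h2 : ContDiff ℝ (⊤ : ℕ∞) (fun y => ((hbar ^ 2 / (2 * m) : ℝ) : ℂ) *
      (pd 1 (pd 1 f) y + pd 2 (pd 2 f) y + pd 3 (pd 3 f) y)) :=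
    contDiff_const.mul (((pd_contDiff (pd_contDiff hf 1) 1).add
      (pd_contDiff (pd_contDiff hf 2) 2)).add (pd_contDiff (pd_contDiff hf 3) 3))
  have hsum : ContDiff ℝ (⊤ : ℕ∞) (fun y => pd 1 (pd 1 f) y + pd 2 (pd 2 f) y + pd 3 (pd 3 f) y) :=
    ((pd_contDiff (pd_contDiff hf 1) 1).add (pd_contDiff (pd_contDiff hf 2) 2)).add
      (pd_contDiff (pd_contDiff hf 3) 3)
  show Ls hbar m (pd d f) = pd d (fun y => Complex.I * (hbar:ℂ) * pd 0 f y +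
      ((hbar ^ 2 / (2 * m) : ℝ) : ℂ) * (pd 1 (pd 1 f) y + pd 2 (pd 2 f) y + pd 3 (pd 3 f) y))
  rw [pd_add h1 h2 d, pd_const_mul (pd_contDiff hf 0) _ d, pd_const_mul hsum _ d,
    pd_add ((pd_contDiff (pd_contDiff hf 1) 1).add (pd_contDiff (pd_contDiff hf 2) 2))
      (pd_contDiff (pd_contDiff hf 3) 3) d,
    pd_add (pd_contDiff (pd_contDiff hf 1) 1) (pd_contDiff (pd_contDiff hf 2) 2) d]
  unfold Ls
  rw [pd_comm hf d 0, pd_comm (pd_contDiff hf 1) d 1, pd_comm hf d 1,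
    pd_comm (pd_contDiff hf 2) d 2, pd_comm hf d 2,
    pd_comm (pd_contDiff hf 3) d 3, pd_comm hf d 3]

theorem Cop_add (hbar m : ℝ) {f g : (Fin 4 → ℝ) → ℂ}
    (hf : ContDiff ℝ (⊤ : ℕ∞) f) (hg : ContDiff ℝ (⊤ : ℕ∞) g) (e : Fin 4) :
    Cop hbar m e (fun y => f y + g y) = fun x => Cop hbar m e f x + Cop hbar m e g x := by
  unfold Cop
  split
  · funext x; ring
  · rw [pd_add hf hg e]; funext x; ring

theorem Ls_Cop (hbar m : ℝ) {f : (Fin 4 → ℝ) → ℂ} (hf : ContDiff ℝ (⊤ : ℕ∞) f) (e : Fin 4) :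
    Ls hbar m (Cop hbar m e f) = Cop hbar m e (Ls hbar m f) := by
  unfold Cop
  split
  · exact Ls_const_mul hbar m hf _
  · rw [Ls_const_mul hbar m (pd_contDiff hf e) _, Ls_pd hbar m hf e]

theorem Ls_Mop (hbar m : ℝ) {f : (Fin 4 → ℝ) → ℂ} (hf : ContDiff ℝ (⊤ : ℕ∞) f) (e : Fin 4) :
    Ls hbar m (Mop e f) = fun x => Mop e (Ls hbar m f) x + Cop hbar m e f x := by
  have key : ∀ j : Fin 4, pd j (pd j (fun y => ((y e : ℝ) : ℂ) * f y))
      = fun x => 2 * (if j = e then (1:ℂ) else 0) * pd j f x + ((x e : ℝ) : ℂ) * pd j (pd j f) x := by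
    intro j
    rw [pd_coord_mul hf e j]
    have h1 : ContDiff ℝ (⊤ : ℕ∞) (fun y => (if j = e then (1:ℂ) else 0) * f y) :=
      contDiff_const.mul hf
    have h2 : ContDiff ℝ (⊤ : ℕ∞) (fun y => ((y e : ℝ) : ℂ) * pd j f y) :=
      (coord_contDiff e).mul (pd_contDiff hf j)
    rw [pd_add h1 h2 j, pd_const_mul hf _ j, pd_coord_mul (pd_contDiff hf j) e j]
    funext x; ring
  unfold Ls Mop
  rw [key 1, key 2, key 3]
  show (fun x => Complex.I * (hbar:ℂ) * pd 0 (fun y => ((y e : ℝ) : ℂ) * f y) x + _) = _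
  rw [pd_coord_mul hf e 0]
  funext x
  simp only
  unfold Cop
  rcases eq_or_ne e 0 with he | he
  · subst he
    simp only [eq_false (by decide : ¬((1:Fin 4) = 0)),
      eq_false (by decide : ¬((2:Fin 4) = 0)),
      eq_false (by decide : ¬((3:Fin 4) = 0)), if_pos rfl, if_false, if_true]
    ring
  · rw [if_neg he]
    have hv : e.1 = 1 ∨ e.1 = 2 ∨ e.1 = 3 := by
      have h4 := e.isLt
      have h0 : e.1 ≠ 0 := fun h0 => he (Fin.ext h0)
      omega
    rcases hv with h | h | h
    · have he1 : e = 1 := Fin.ext (by rw [h]; rfl)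
      subst he1
      simp only [eq_false (by decide : ¬((0:Fin 4) = 1)),
        eq_false (by decide : ¬((2:Fin 4) = 1)),
        eq_false (by decide : ¬((3:Fin 4) = 1)), if_pos rfl, if_false, if_true]
      ring
    · have he1 : e = 2 := Fin.ext (by rw [h]; rfl)
      subst he1
      simp only [eq_false (by decide : ¬((0:Fin 4) = 2)),
        eq_false (by decide : ¬((1:Fin 4) = 2)),
        eq_false (by decide : ¬((3:Fin 4) = 2)), if_pos rfl, if_false, if_true]
      ring
    · have he1 : e = 3 := Fin.ext (by rw [h]; rfl)
      subst he1
      simp only [eq_false (by decide : ¬((0:Fin 4) = 3)),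
        eq_false (by decide : ¬((1:Fin 4) = 3)),
        eq_false (by decide : ¬((2:Fin 4) = 3)), if_pos rfl, if_false, if_true]
      ring

section Composite

variable (hbar m : ℝ) {u : (Fin 4 → ℝ) → ℂ}

theorem L_MM (hu : ContDiff ℝ (⊤ : ℕ∞) u) (b c : Fin 4) :
    Ls hbar m (Mop b (Mop c u)) = fun x =>
      Mop b (Mop c (Ls hbar m u)) x + Mop b (Cop hbar m c u) x + Cop hbar m b (Mop c u) x := by
  rw [Ls_Mop hbar m (Mop_contDiff hu c) b, Ls_Mop hbar m hu c]
  funext x; simp only [Mop]; ring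

theorem L_MMM (hu : ContDiff ℝ (⊤ : ℕ∞) u) (a b c : Fin 4) :
    Ls hbar m (Mop a (Mop b (Mop c u))) = fun x =>
      Mop a (Mop b (Mop c (Ls hbar m u))) x + Mop a (Mop b (Cop hbar m c u)) x
        + Mop a (Cop hbar m b (Mop c u)) x + Cop hbar m a (Mop b (Mop c u)) x := by
  rw [Ls_Mop hbar m (Mop_contDiff (Mop_contDiff hu c) b) a, L_MM hbar m hu b c]
  funext x; simp only [Mop]; ring

theorem L_MC (hu : ContDiff ℝ (⊤ : ℕ∞) u) (b c : Fin 4) :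
    Ls hbar m (Mop b (Cop hbar m c u)) = fun x =>
      Mop b (Cop hbar m c (Ls hbar m u)) x + Cop hbar m b (Cop hbar m c u) x := by
  rw [Ls_Mop hbar m (Cop_contDiff hbar m hu c) b, Ls_Cop hbar m hu c]

theorem L_CM (hu : ContDiff ℝ (⊤ : ℕ∞) u) (b c : Fin 4) :
    Ls hbar m (Cop hbar m b (Mop c u)) = fun x =>
      Cop hbar m b (Mop c (Ls hbar m u)) x + Cop hbar m b (Cop hbar m c u) x := by
  rw [Ls_Cop hbar m (Mop_contDiff hu c) b, Ls_Mop hbar m hu c,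
    Cop_add hbar m (Mop_contDiff (Ls_contDiff hbar m hu) c) (Cop_contDiff hbar m hu c) b]

theorem L_CC (hu : ContDiff ℝ (⊤ : ℕ∞) u) (b c : Fin 4) :
    Ls hbar m (Cop hbar m b (Cop hbar m c u))
      = Cop hbar m b (Cop hbar m c (Ls hbar m u)) := by
  rw [Ls_Cop hbar m (Cop_contDiff hbar m hu c) b, Ls_Cop hbar m hu c]

theorem L_MMC (hu : ContDiff ℝ (⊤ : ℕ∞) u) (a b c : Fin 4) :
    Ls hbar m (Mop a (Mop b (Cop hbar m c u))) = fun x =>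
      Mop a (Mop b (Cop hbar m c (Ls hbar m u))) x + Mop a (Cop hbar m b (Cop hbar m c u)) x
        + Cop hbar m a (Mop b (Cop hbar m c u)) x := by
  rw [Ls_Mop hbar m (Mop_contDiff (Cop_contDiff hbar m hu c) b) a, L_MC hbar m hu b c]
  funext x; simp only [Mop]; ring

theorem L_MCM (hu : ContDiff ℝ (⊤ : ℕ∞) u) (a b c : Fin 4) :
    Ls hbar m (Mop a (Cop hbar m b (Mop c u))) = fun x =>
      Mop a (Cop hbar m b (Mop c (Ls hbar m u))) x + Mop a (Cop hbar m b (Cop hbar m c u)) x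
        + Cop hbar m a (Cop hbar m b (Mop c u)) x := by
  rw [Ls_Mop hbar m (Cop_contDiff hbar m (Mop_contDiff hu c) b) a, L_CM hbar m hu b c]
  funext x; simp only [Mop]; ring

theorem L_CMM (hu : ContDiff ℝ (⊤ : ℕ∞) u) (a b c : Fin 4) :
    Ls hbar m (Cop hbar m a (Mop b (Mop c u))) = fun x =>
      Cop hbar m a (Mop b (Mop c (Ls hbar m u))) x + Cop hbar m a (Mop b (Cop hbar m c u)) x
        + Cop hbar m a (Cop hbar m b (Mop c u)) x := by
  rw [Ls_Cop hbar m (Mop_contDiff (Mop_contDiff hu c) b) a, L_MM hbar m hu b c,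
    Cop_add hbar m ((Mop_contDiff (Mop_contDiff (Ls_contDiff hbar m hu) c) b).add
      (Mop_contDiff (Cop_contDiff hbar m hu c) b)) (Cop_contDiff hbar m (Mop_contDiff hu c) b) a,
    Cop_add hbar m (Mop_contDiff (Mop_contDiff (Ls_contDiff hbar m hu) c) b)
      (Mop_contDiff (Cop_contDiff hbar m hu c) b) a]

theorem L_MCC (hu : ContDiff ℝ (⊤ : ℕ∞) u) (a b c : Fin 4) :
    Ls hbar m (Mop a (Cop hbar m b (Cop hbar m c u))) = fun x =>
      Mop a (Cop hbar m b (Cop hbar m c (Ls hbar m u))) x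
        + Cop hbar m a (Cop hbar m b (Cop hbar m c u)) x := by
  rw [Ls_Mop hbar m (Cop_contDiff hbar m (Cop_contDiff hbar m hu c) b) a, L_CC hbar m hu b c]

theorem L_CMC (hu : ContDiff ℝ (⊤ : ℕ∞) u) (a b c : Fin 4) :
    Ls hbar m (Cop hbar m a (Mop b (Cop hbar m c u))) = fun x =>
      Cop hbar m a (Mop b (Cop hbar m c (Ls hbar m u))) x
        + Cop hbar m a (Cop hbar m b (Cop hbar m c u)) x := by
  rw [Ls_Cop hbar m (Mop_contDiff (Cop_contDiff hbar m hu c) b) a, L_MC hbar m hu b c,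
    Cop_add hbar m (Mop_contDiff (Cop_contDiff hbar m (Ls_contDiff hbar m hu) c) b)
      (Cop_contDiff hbar m (Cop_contDiff hbar m hu c) b) a]

theorem L_CCM (hu : ContDiff ℝ (⊤ : ℕ∞) u) (a b c : Fin 4) :
    Ls hbar m (Cop hbar m a (Cop hbar m b (Mop c u))) = fun x =>
      Cop hbar m a (Cop hbar m b (Mop c (Ls hbar m u))) x
        + Cop hbar m a (Cop hbar m b (Cop hbar m c u)) x := by
  rw [Ls_Cop hbar m (Cop_contDiff hbar m (Mop_contDiff hu c) b) a, L_CM hbar m hu b c,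
    Cop_add hbar m (Cop_contDiff hbar m (Mop_contDiff (Ls_contDiff hbar m hu) c) b)
      (Cop_contDiff hbar m (Cop_contDiff hbar m hu c) b) a]

theorem L_CCC (hu : ContDiff ℝ (⊤ : ℕ∞) u) (a b c : Fin 4) :
    Ls hbar m (Cop hbar m a (Cop hbar m b (Cop hbar m c u)))
      = Cop hbar m a (Cop hbar m b (Cop hbar m c (Ls hbar m u))) := by
  rw [Ls_Cop hbar m (Cop_contDiff hbar m (Cop_contDiff hbar m hu c) b) a, L_CC hbar m hu b c]

end Composite

/-! ### the graded pieces of the iterated commutator -/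

noncomputable def Q0' (a b c d : Fin 4) (f : (Fin 4 → ℝ) → ℂ) : (Fin 4 → ℝ) → ℂ :=
  Mop a (Mop b (Mop c (pd d f)))

noncomputable def Q1' (hbar m : ℝ) (a b c d : Fin 4) (f : (Fin 4 → ℝ) → ℂ) : (Fin 4 → ℝ) → ℂ :=
  fun x => Mop a (Mop b (Cop hbar m c (pd d f))) x + Mop a (Cop hbar m b (Mop c (pd d f))) x
    + Cop hbar m a (Mop b (Mop c (pd d f))) x

noncomputable def Q2' (hbar m : ℝ) (a b c d : Fin 4) (f : (Fin 4 → ℝ) → ℂ) : (Fin 4 → ℝ) → ℂ :=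
  fun x => 2 * (Mop a (Cop hbar m b (Cop hbar m c (pd d f))) x
    + Cop hbar m a (Mop b (Cop hbar m c (pd d f))) x
    + Cop hbar m a (Cop hbar m b (Mop c (pd d f))) x)

noncomputable def Q3' (hbar m : ℝ) (a b c d : Fin 4) (f : (Fin 4 → ℝ) → ℂ) : (Fin 4 → ℝ) → ℂ :=
  fun x => 6 * Cop hbar m a (Cop hbar m b (Cop hbar m c (pd d f))) x

section Graded

variable (hbar m : ℝ) (a b c d : Fin 4) {f : (Fin 4 → ℝ) → ℂ}

theorem Q0'_contDiff (hf : ContDiff ℝ (⊤ : ℕ∞) f) : ContDiff ℝ (⊤ : ℕ∞) (Q0' a b c d f) :=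
  Mop_contDiff (Mop_contDiff (Mop_contDiff (pd_contDiff hf d) c) b) a

theorem Q1'_contDiff (hf : ContDiff ℝ (⊤ : ℕ∞) f) : ContDiff ℝ (⊤ : ℕ∞) (Q1' hbar m a b c d f) := by
  have h := pd_contDiff hf d
  exact ((Mop_contDiff (Mop_contDiff (Cop_contDiff hbar m h c) b) a).add
    (Mop_contDiff (Cop_contDiff hbar m (Mop_contDiff h c) b) a)).add
    (Cop_contDiff hbar m (Mop_contDiff (Mop_contDiff h c) b) a)

theorem Q2'_contDiff (hf : ContDiff ℝ (⊤ : ℕ∞) f) : ContDiff ℝ (⊤ : ℕ∞) (Q2' hbar m a b c d f) := by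
  have h := pd_contDiff hf d
  exact contDiff_const.mul
    (((Mop_contDiff (Cop_contDiff hbar m (Cop_contDiff hbar m h c) b) a).add
      (Cop_contDiff hbar m (Mop_contDiff (Cop_contDiff hbar m h c) b) a)).add
      (Cop_contDiff hbar m (Cop_contDiff hbar m (Mop_contDiff h c) b) a))

theorem Q3'_contDiff (hf : ContDiff ℝ (⊤ : ℕ∞) f) : ContDiff ℝ (⊤ : ℕ∞) (Q3' hbar m a b c d f) := by
  have h := pd_contDiff hf d
  exact contDiff_const.mul
    (Cop_contDiff hbar m (Cop_contDiff hbar m (Cop_contDiff hbar m h c) b) a)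

theorem E1 (hf : ContDiff ℝ (⊤ : ℕ∞) f) :
    Ls hbar m (Q0' a b c d f)
      = fun x => Q0' a b c d (Ls hbar m f) x + Q1' hbar m a b c d f x := by
  unfold Q0' Q1'
  rw [L_MMM hbar m (pd_contDiff hf d) a b c, Ls_pd hbar m hf d]
  funext x; ring

theorem E2 (hf : ContDiff ℝ (⊤ : ℕ∞) f) :
    Ls hbar m (Q1' hbar m a b c d f)
      = fun x => Q1' hbar m a b c d (Ls hbar m f) x + Q2' hbar m a b c d f x := by
  have h := pd_contDiff hf d
  have hT1 : ContDiff ℝ (⊤ : ℕ∞) (Mop a (Mop b (Cop hbar m c (pd d f)))) :=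
    Mop_contDiff (Mop_contDiff (Cop_contDiff hbar m h c) b) a
  have hT2 : ContDiff ℝ (⊤ : ℕ∞) (Mop a (Cop hbar m b (Mop c (pd d f)))) :=
    Mop_contDiff (Cop_contDiff hbar m (Mop_contDiff h c) b) a
  have hT3 : ContDiff ℝ (⊤ : ℕ∞) (Cop hbar m a (Mop b (Mop c (pd d f)))) :=
    Cop_contDiff hbar m (Mop_contDiff (Mop_contDiff h c) b) a
  unfold Q1' Q2'
  rw [Ls_add hbar m (hT1.add hT2) hT3, Ls_add hbar m hT1 hT2,
    L_MMC hbar m h a b c, L_MCM hbar m h a b c, L_CMM hbar m h a b c, Ls_pd hbar m hf d]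
  funext x; simp only []; ring

theorem E3 (hf : ContDiff ℝ (⊤ : ℕ∞) f) :
    Ls hbar m (Q2' hbar m a b c d f)
      = fun x => Q2' hbar m a b c d (Ls hbar m f) x + Q3' hbar m a b c d f x := by
  have h := pd_contDiff hf d
  have hU1 : ContDiff ℝ (⊤ : ℕ∞) (Mop a (Cop hbar m b (Cop hbar m c (pd d f)))) :=
    Mop_contDiff (Cop_contDiff hbar m (Cop_contDiff hbar m h c) b) a
  have hU2 : ContDiff ℝ (⊤ : ℕ∞) (Cop hbar m a (Mop b (Cop hbar m c (pd d f)))) :=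
    Cop_contDiff hbar m (Mop_contDiff (Cop_contDiff hbar m h c) b) a
  have hU3 : ContDiff ℝ (⊤ : ℕ∞) (Cop hbar m a (Cop hbar m b (Mop c (pd d f)))) :=
    Cop_contDiff hbar m (Cop_contDiff hbar m (Mop_contDiff h c) b) a
  unfold Q2' Q3'
  rw [Ls_const_mul hbar m (((hU1.add hU2).add hU3)) 2, Ls_add hbar m (hU1.add hU2) hU3,
    Ls_add hbar m hU1 hU2, L_MCC hbar m h a b c, L_CMC hbar m h a b c, L_CCM hbar m h a b c,
    Ls_pd hbar m hf d]
  funext x; simp only []; ring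

theorem E4 (hf : ContDiff ℝ (⊤ : ℕ∞) f) :
    Ls hbar m (Q3' hbar m a b c d f) = Q3' hbar m a b c d (Ls hbar m f) := by
  have h := pd_contDiff hf d
  unfold Q3'
  rw [Ls_const_mul hbar m
    (Cop_contDiff hbar m (Cop_contDiff hbar m (Cop_contDiff hbar m h c) b) a) 6,
    L_CCC hbar m h a b c, Ls_pd hbar m hf d]

end Graded

section Iterate

variable (hbar m : ℝ) (a b c d : Fin 4) {f : (Fin 4 → ℝ) → ℂ}

theorem G2 (hf : ContDiff ℝ (⊤ : ℕ∞) f) :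
    Ls hbar m (Ls hbar m (Q0' a b c d f)) = fun x =>
      Q0' a b c d (Ls hbar m (Ls hbar m f)) x + 2 * Q1' hbar m a b c d (Ls hbar m f) x
        + Q2' hbar m a b c d f x := by
  have hLf := Ls_contDiff hbar m hf
  rw [E1 hbar m a b c d hf,
    Ls_add hbar m (Q0'_contDiff a b c d hLf) (Q1'_contDiff hbar m a b c d hf),
    E1 hbar m a b c d hLf, E2 hbar m a b c d hf]
  funext x; simp only []; ring

theorem G3 (hf : ContDiff ℝ (⊤ : ℕ∞) f) :
    Ls hbar m (Ls hbar m (Ls hbar m (Q0' a b c d f))) = fun x =>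
      Q0' a b c d (Ls hbar m (Ls hbar m (Ls hbar m f))) x
        + 3 * Q1' hbar m a b c d (Ls hbar m (Ls hbar m f)) x
        + 3 * Q2' hbar m a b c d (Ls hbar m f) x
        + Q3' hbar m a b c d f x := by
  have hLf := Ls_contDiff hbar m hf
  have hLLf := Ls_contDiff hbar m hLf
  have h2Q1 : ContDiff ℝ (⊤ : ℕ∞) (fun x => 2 * Q1' hbar m a b c d (Ls hbar m f) x) :=
    contDiff_const.mul (Q1'_contDiff hbar m a b c d hLf)
  rw [G2 hbar m a b c d hf,
    Ls_add hbar m ((Q0'_contDiff a b c d hLLf).add h2Q1) (Q2'_contDiff hbar m a b c d hf),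
    Ls_add hbar m (Q0'_contDiff a b c d hLLf) h2Q1,
    Ls_const_mul hbar m (Q1'_contDiff hbar m a b c d hLf) 2,
    E1 hbar m a b c d hLLf, E2 hbar m a b c d hLf, E3 hbar m a b c d hf]
  funext x; simp only []; ring

theorem G4 (hf : ContDiff ℝ (⊤ : ℕ∞) f) :
    Ls hbar m (Ls hbar m (Ls hbar m (Ls hbar m (Q0' a b c d f)))) = fun x =>
      Q0' a b c d (Ls hbar m (Ls hbar m (Ls hbar m (Ls hbar m f)))) x
        + 4 * Q1' hbar m a b c d (Ls hbar m (Ls hbar m (Ls hbar m f))) x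
        + 6 * Q2' hbar m a b c d (Ls hbar m (Ls hbar m f)) x
        + 4 * Q3' hbar m a b c d (Ls hbar m f) x := by
  have hLf := Ls_contDiff hbar m hf
  have hLLf := Ls_contDiff hbar m hLf
  have hLLLf := Ls_contDiff hbar m hLLf
  have h3Q1 : ContDiff ℝ (⊤ : ℕ∞) (fun x => 3 * Q1' hbar m a b c d (Ls hbar m (Ls hbar m f)) x) :=
    contDiff_const.mul (Q1'_contDiff hbar m a b c d hLLf)
  have h3Q2 : ContDiff ℝ (⊤ : ℕ∞) (fun x => 3 * Q2' hbar m a b c d (Ls hbar m f) x) :=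
    contDiff_const.mul (Q2'_contDiff hbar m a b c d hLf)
  rw [G3 hbar m a b c d hf,
    Ls_add hbar m (((Q0'_contDiff a b c d hLLLf).add h3Q1).add h3Q2)
      (Q3'_contDiff hbar m a b c d hf),
    Ls_add hbar m ((Q0'_contDiff a b c d hLLLf).add h3Q1) h3Q2,
    Ls_add hbar m (Q0'_contDiff a b c d hLLLf) h3Q1,
    Ls_const_mul hbar m (Q1'_contDiff hbar m a b c d hLLf) 3,
    Ls_const_mul hbar m (Q2'_contDiff hbar m a b c d hLf) 3,
    E1 hbar m a b c d hLLLf, E2 hbar m a b c d hLLf, E3 hbar m a b c d hLf,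
    E4 hbar m a b c d hf]
  funext x; simp only []; ring

end Iterate

theorem Qabcd_eq_Q0' (a b c d : Fin 4) (f : (Fin 4 → ℝ) → ℂ) :
    Qabcd a b c d f = Q0' a b c d f := by
  funext x; simp only [Qabcd, Q0', Mop]; ring

/-- the fourth-order commutator of the free Schrödinger operator
with `Q = x_a x_b x_c ∂_d` vanishes identically; expanded as compositions,
`[L_s,[L_s,[L_s,[L_s,Q]]]]φ = L⁴Qφ − 4L³QLφ + 6L²QL²φ − 4LQL³φ + QL⁴φ = 0`. -/
theorem stmt_18 (hbar m : ℝ) (hhbar : 0 < hbar) (hm : 0 < m) :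
    ∀ a b c d : Fin 4, ∀ φ : (Fin 4 → ℝ) → ℂ, ContDiff ℝ (⊤ : ℕ∞) φ →
      ∀ x : Fin 4 → ℝ,
        Ls hbar m (Ls hbar m (Ls hbar m (Ls hbar m (Qabcd a b c d φ)))) x
          - 4 * Ls hbar m (Ls hbar m (Ls hbar m (Qabcd a b c d (Ls hbar m φ)))) x
          + 6 * Ls hbar m (Ls hbar m (Qabcd a b c d (Ls hbar m (Ls hbar m φ)))) x
          - 4 * Ls hbar m (Qabcd a b c d (Ls hbar m (Ls hbar m (Ls hbar m φ)))) x
          + Qabcd a b c d (Ls hbar m (Ls hbar m (Ls hbar m (Ls hbar m φ)))) x = 0 := by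
  intro a b c d φ hφ x
  have hLφ := Ls_contDiff hbar m hφ
  have hLLφ := Ls_contDiff hbar m hLφ
  have hLLLφ := Ls_contDiff hbar m hLLφ
  rw [Qabcd_eq_Q0', Qabcd_eq_Q0', Qabcd_eq_Q0', Qabcd_eq_Q0', Qabcd_eq_Q0',
    G4 hbar m a b c d hφ, G3 hbar m a b c d hLφ, G2 hbar m a b c d hLLφ,
    E1 hbar m a b c d hLLLφ]
  simp only []
  ring
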